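/- Edge insertion preserves the ForwardPush invariant under the DynamicSNE update: let u ≠ v be non-adjacent vertices of G and let G' be the graph G with the edge {u,v} inserted, with degree function d' (so d'(u) = d(u)+1, d'(v) = d(v)+1, d'(w) = d(w) otherwise) and personalized PageRank vectors π'_x. Suppose p, r ∈ ℝ^V satisfy π_s(w) = p(w) + Σ_{x∈V} r(x)·π_x(w) for every w ∈ V. Define Δ_u = p(u)/d(u), Δ_v = p(v)/d(v), p' = p + Δ_u·e_u + Δ_v·e_v, and r' equal to r except r'(u) = r(u) − Δ_u/α + (1−α)·Δ_v/α and r'(v) = r(v) − Δ_v/α + (1−α)·Δ_u/α. Then π'_s(w) = p'(w) + Σ_{x∈V} r'(x)·π'_x(w) for every w ∈ V. -/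

import Mathlib

/-!
With `M = 1 - (1 - α) • Wᵀ`, every PPV satisfies `M π_x = α e_x`, and `M` is invertible
because `W` is row-stochastic (Gershgorin). Hence the ForwardPush invariant
`π_s = p + ∑ r(x) π_x` is equivalent to the local identity `M p + α r = α e_s`. Moreover
`Wᵀ p = A (p / d)`, and the update leaves `p / d` unchanged, since
`(p(u) + Δ_u) / (d(u) + 1) = Δ_u = p(u) / d(u)`. So inserting `{u, v}` changes `M p` by
`Δ_u e_u + Δ_v e_v - (1 - α) (Δ_v e_u + Δ_u e_v)`, which is exactly cancelled by the change
of `α r`.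
-/

open Matrix

/-- The random-walk transition matrix `W = D⁻¹ A` of a finite simple graph,
with entries `W i j = A i j / d(i)`. -/
noncomputable def walkMatrix {V : Type*} [Fintype V] [DecidableEq V]
    (G : SimpleGraph V) [DecidableRel G.Adj] : Matrix V V ℝ :=
  (Matrix.diagonal fun i => ((G.degree i : ℝ))⁻¹) * G.adjMatrix ℝ

namespace Matrix

variable {V : Type*} [Fintype V] [DecidableEq V]

theorem isUnit_one_sub_smul_of_mem_rowStochastic {W : Matrix V V ℝ}
    (hW : W ∈ rowStochastic ℝ V) {c : ℝ} (hc0 : 0 ≤ c) (hc1 : c < 1) :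
    IsUnit (1 - c • W) := by
  rw [isUnit_iff_isUnit_det, isUnit_iff_ne_zero]
  refine det_ne_zero_of_sum_row_lt_diag fun k => ?_
  have hoff : ∑ j ∈ Finset.univ.erase k, ‖(1 - c • W) k j‖ = c * (1 - W k k) := by
    rw [← sum_row_of_mem_rowStochastic hW k, ← Finset.add_sum_erase _ _ (Finset.mem_univ k),
      add_sub_cancel_left, Finset.mul_sum]
    refine Finset.sum_congr rfl fun j hj => ?_
    rw [sub_apply, smul_apply, one_apply_ne (Finset.ne_of_mem_erase hj).symm, zero_sub, norm_neg,
      smul_eq_mul, Real.norm_of_nonneg (mul_nonneg hc0 (hW.1 k j))]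
  have hdiag : ‖(1 - c • W) k k‖ = 1 - c * W k k := by
    rw [sub_apply, smul_apply, one_apply_eq, smul_eq_mul, Real.norm_of_nonneg]
    nlinarith [le_one_of_mem_rowStochastic hW (i := k) (j := k)]
  rw [hoff, hdiag]
  linarith

theorem eq_add_sum_smul_iff_mulVec_add_smul_eq {K : Type*} [Field K] {M : Matrix V V K}
    (hM : IsUnit M) {α : K} {π : V → V → K} (hπ : ∀ x, M *ᵥ π x = α • Pi.single x 1)
    (s : V) (p r : V → K) :
    π s = p + ∑ x, r x • π x ↔ M *ᵥ p + α • r = α • Pi.single s 1 := by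
  have hsum : M *ᵥ (p + ∑ x, r x • π x) = M *ᵥ p + α • r := by
    simp only [mulVec_add, mulVec_sum, mulVec_smul, hπ, smul_comm _ α, ← Finset.smul_sum]
    rw [← pi_eq_sum_univ' r]
  rw [← hsum, ← hπ s]
  exact (mulVec_injective_of_isUnit hM).eq_iff.symm.trans eq_comm

end Matrix

namespace SimpleGraph

variable {V : Type*} [DecidableEq V]

structure IsEdgeInsertion (G G' : SimpleGraph V) (u v : V) : Prop where
  ne : u ≠ v
  not_adj : ¬ G.Adj u v
  adj_iff : ∀ a b, G'.Adj a b ↔ G.Adj a b ∨ (a = u ∧ b = v) ∨ (a = v ∧ b = u)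

namespace IsEdgeInsertion

variable {G G' : SimpleGraph V} [DecidableRel G.Adj] [DecidableRel G'.Adj] {u v : V}

theorem adjMatrix_eq {R : Type*} [NonAssocSemiring R] (h : IsEdgeInsertion G G' u v) :
    G'.adjMatrix R = G.adjMatrix R + single u v 1 + single v u 1 := by
  ext a b
  have hvu : ¬ G.Adj v u := fun hvu => h.not_adj hvu.symm
  simp only [adjMatrix_apply, Matrix.add_apply, single_apply, h.adj_iff]
  split_ifs <;> grind [h.ne, h.not_adj]

variable [Fintype V]

theorem adjMatrix_mulVec {R : Type*} [NonAssocSemiring R] (h : IsEdgeInsertion G G' u v)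
    (f : V → R) :
    G'.adjMatrix R *ᵥ f = G.adjMatrix R *ᵥ f + Pi.single u (f v) + Pi.single v (f u) := by
  rw [h.adjMatrix_eq, add_mulVec, add_mulVec, single_mulVec, single_mulVec, one_mul, one_mul]
  rfl

theorem natCast_degree {R : Type*} [NonAssocSemiring R] (h : IsEdgeInsertion G G' u v) :
    (fun w => (G'.degree w : R)) =
      (fun w => (G.degree w : R)) + Pi.single u 1 + Pi.single v 1 := by
  ext w
  simpa using congrFun (h.adjMatrix_mulVec (Function.const V (1 : R))) w

theorem div_natCast_degree_update {K : Type*} [Field K] [CharZero K]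
    (h : IsEdgeInsertion G G' u v) (hu : G.degree u ≠ 0) (hv : G.degree v ≠ 0) (p : V → K) :
    (p + (p u / G.degree u) • Pi.single u 1 + (p v / G.degree v) • Pi.single v 1) /
        (fun w => (G'.degree w : K)) = p / fun w => (G.degree w : K) := by
  rw [h.natCast_degree]
  ext w
  rcases eq_or_ne w u with rfl | hwu
  · simp only [Pi.div_apply, Pi.add_apply, Pi.smul_apply, smul_eq_mul, Pi.single_eq_same,
      Pi.single_eq_of_ne h.ne, mul_one, mul_zero, add_zero]
    field_simp
  rcases eq_or_ne w v with rfl | hwv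
  · simp only [Pi.div_apply, Pi.add_apply, Pi.smul_apply, smul_eq_mul, Pi.single_eq_same,
      Pi.single_eq_of_ne h.ne.symm, mul_one, mul_zero, add_zero]
    field_simp
  · simp [hwu, hwv]

end IsEdgeInsertion

variable [Fintype V] (G : SimpleGraph V) [DecidableRel G.Adj]

theorem walkMatrix_mem_rowStochastic (hd : ∀ w, 0 < G.degree w) :
    walkMatrix G ∈ rowStochastic ℝ V := by
  refine mem_rowStochastic.2 ⟨fun i j => ?_, ?_⟩
  · simp only [walkMatrix, diagonal_mul]
    exact mul_nonneg (by positivity) (by by_cases h : G.Adj i j <;> simp [h])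
  · ext i
    simp [walkMatrix, ← mulVec_mulVec, mulVec_diagonal, (hd i).ne']

theorem transpose_walkMatrix_mulVec (p : V → ℝ) :
    (walkMatrix G)ᵀ *ᵥ p = G.adjMatrix ℝ *ᵥ (p / fun j => (G.degree j : ℝ)) := by
  ext w
  simp [walkMatrix, ← mulVec_mulVec, mulVec_diagonal, div_eq_inv_mul]

theorem forwardPush_invariant_iff (hd : ∀ w, 0 < G.degree w) {α : ℝ} (hα0 : 0 < α)
    (hα1 : α < 1) {π : V → V → ℝ}
    (hπ : ∀ x, π x = α • (Pi.single x 1 : V → ℝ) + (1 - α) • ((walkMatrix G)ᵀ *ᵥ π x))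
    (s : V) (p r : V → ℝ) :
    (∀ w, π s w = p w + ∑ x, r x * π x w) ↔
      p - (1 - α) • (G.adjMatrix ℝ *ᵥ (p / fun w => (G.degree w : ℝ))) + α • r =
        α • Pi.single s 1 := by
  have hM : IsUnit (1 - (1 - α) • (walkMatrix G)ᵀ) := by
    rw [← transpose_one, ← transpose_smul, ← transpose_sub, isUnit_transpose]
    exact isUnit_one_sub_smul_of_mem_rowStochastic (G.walkMatrix_mem_rowStochastic hd)
      (by linarith) (by linarith)
  have hMπ : ∀ x, (1 - (1 - α) • (walkMatrix G)ᵀ) *ᵥ π x = α • Pi.single x 1 := fun x => by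
    rw [sub_mulVec, one_mulVec, smul_mulVec, sub_eq_iff_eq_add]
    exact hπ x
  have hMp : (1 - (1 - α) • (walkMatrix G)ᵀ) *ᵥ p =
      p - (1 - α) • (G.adjMatrix ℝ *ᵥ (p / fun w => (G.degree w : ℝ))) := by
    rw [sub_mulVec, one_mulVec, smul_mulVec, transpose_walkMatrix_mulVec]
  rw [← hMp, ← eq_add_sum_smul_iff_mulVec_add_smul_eq hM hMπ, funext_iff]
  simp [Finset.sum_apply]

end SimpleGraph

/-- Edge insertion preserves the ForwardPush invariant under the DynamicSNE update:
if `G'` is `G` with the (previously absent) edge `{u,v}` inserted, `(p, r)` satisfies the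
ForwardPush invariant for `s` on `G`, and with `Δ_u = p(u)/d(u)`, `Δ_v = p(v)/d(v)` we set
`p' = p + Δ_u·e_u + Δ_v·e_v`, `r'(u) = r(u) − Δ_u/α + (1−α)·Δ_v/α`,
`r'(v) = r(v) − Δ_v/α + (1−α)·Δ_u/α`, and `r'(w) = r(w)` otherwise, then `(p', r')`
satisfies the ForwardPush invariant for `s` on `G'`. -/
theorem edge_insertion_preserves_invariant
    {V : Type*} [Fintype V] [DecidableEq V]
    (G G' : SimpleGraph V) [DecidableRel G.Adj] [DecidableRel G'.Adj]
    (α : ℝ) (hα : α ∈ Set.Ioo (0 : ℝ) 1)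
    (u v : V) (huv : u ≠ v) (hnadj : ¬ G.Adj u v)
    (hG' : ∀ a b : V, G'.Adj a b ↔ G.Adj a b ∨ (a = u ∧ b = v) ∨ (a = v ∧ b = u))
    (hd : ∀ w : V, 0 < G.degree w) (hd' : ∀ w : V, 0 < G'.degree w)
    (π π' : V → V → ℝ)
    (hπ : ∀ x : V,
      π x = α • (Pi.single x 1 : V → ℝ) + (1 - α) • ((walkMatrix G)ᵀ *ᵥ π x))
    (hπ' : ∀ x : V,
      π' x = α • (Pi.single x 1 : V → ℝ) + (1 - α) • ((walkMatrix G')ᵀ *ᵥ π' x))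
    (s : V) (p r : V → ℝ)
    (hinv : ∀ w : V, π s w = p w + ∑ x : V, r x * π x w)
    (Δu Δv : ℝ) (hΔu : Δu = p u / (G.degree u : ℝ)) (hΔv : Δv = p v / (G.degree v : ℝ))
    (p' r' : V → ℝ)
    (hp' : p' = p + Δu • (Pi.single u 1 : V → ℝ) + Δv • (Pi.single v 1 : V → ℝ))
    (hr'u : r' u = r u - Δu / α + (1 - α) * Δv / α)
    (hr'v : r' v = r v - Δv / α + (1 - α) * Δu / α)
    (hr' : ∀ w : V, w ≠ u → w ≠ v → r' w = r w) :
    ∀ w : V, π' s w = p' w + ∑ x : V, r' x * π' x w := by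
  obtain ⟨hα0, hα1⟩ := hα
  have hins : G.IsEdgeInsertion G' u v := ⟨huv, hnadj, hG'⟩
  have hkey := (G.forwardPush_invariant_iff hd hα0 hα1 hπ s p r).1 hinv
  refine (G'.forwardPush_invariant_iff hd' hα0 hα1 hπ' s p' r').2 ?_
  have hratio : (p' / fun w => (G'.degree w : ℝ)) = p / fun w => (G.degree w : ℝ) := by
    rw [hp', hΔu, hΔv]
    exact hins.div_natCast_degree_update (hd u).ne' (hd v).ne' p
  rw [hins.adjMatrix_mulVec, hratio, ← hkey]
  ext w
  simp only [Pi.add_apply, Pi.sub_apply, Pi.smul_apply, Pi.div_apply, smul_eq_mul, hp', ← hΔu,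
    ← hΔv]
  rcases eq_or_ne w u with rfl | hwu
  · simp only [Pi.single_eq_same, Pi.single_eq_of_ne huv, mul_one, mul_zero, add_zero, hr'u]
    field_simp
    ring
  rcases eq_or_ne w v with rfl | hwv
  · simp only [Pi.single_eq_same, Pi.single_eq_of_ne huv.symm, mul_one, mul_zero, add_zero, hr'v]
    field_simp
    ring
  · simp [hwu, hwv, hr' w hwu hwv]
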